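/- In the Weyl group of type B_n or C_n, for r = n, the element v = (2,3,...,n-1,n,1) (one-line notation) is the unique maximal element of W^{I_n} with v(ω_n) ≥ 0, and w = (2,3,...,n-1,n,-1) = s_1 v is the unique minimal element of W^{I_n} with w(ω_n) ≤ 0; moreover w(ω_n) = -v(ω_n). -/

import Mathlib

open Equiv Finset

noncomputable section

/-- Reflection in `ε_b - ε_a`: the signed transposition `(a,b)(-a,-b)`. -/
def tswap (a b : ℤ) : Equiv.Perm ℤ := Equiv.swap a b * Equiv.swap (-a) (-b)

/-- Reflection in `ε_a + ε_b`: the signed transposition `(a,-b)(-a,b)`. -/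
def tswapNeg (a b : ℤ) : Equiv.Perm ℤ := Equiv.swap a (-b) * Equiv.swap (-a) b

/-- Coxeter generators of the hyperoctahedral group `B_n`:
`s_1 = (1,-1)` and `s_i = (i-1,i)(-(i-1),-i)` for `i ≥ 2`. -/
def bgen (i : ℤ) : Equiv.Perm ℤ := if i = 1 then Equiv.swap 1 (-1) else tswap (i - 1) i

/-- Coxeter generators of the Weyl group `D_n`:
`s_1 = (1,-2)(-1,2)` and `s_i = (i-1,i)(-(i-1),-i)` for `i ≥ 2`. -/
def dgen (i : ℤ) : Equiv.Perm ℤ := if i = 1 then tswapNeg 1 2 else tswap (i - 1) i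

def BGens (n : ℕ) : Set (Equiv.Perm ℤ) := bgen '' {i : ℤ | 1 ≤ i ∧ i ≤ (n : ℤ)}

def DGens (n : ℕ) : Set (Equiv.Perm ℤ) := dgen '' {i : ℤ | 1 ≤ i ∧ i ≤ (n : ℤ)}

/-- Adjacent transpositions of the linearly ordered set `{-n,…,-1,1,…,n}`:
Coxeter generators of the symmetric group on these `2n` symbols. -/
def SGens (n : ℕ) : Set (Equiv.Perm ℤ) :=
  (fun i : ℤ => Equiv.swap i (if i = -1 then 1 else i + 1)) ''
    {i : ℤ | -(n : ℤ) ≤ i ∧ i ≤ (n : ℤ) - 1 ∧ i ≠ 0}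

/-- Word length of `σ` with respect to a generating set `S` (Coxeter length). -/
def wordLen (S : Set (Equiv.Perm ℤ)) (σ : Equiv.Perm ℤ) : ℕ :=
  sInf {k | ∃ l : List (Equiv.Perm ℤ), l.length = k ∧ (∀ x ∈ l, x ∈ S) ∧ l.prod = σ}

/-- Reflections: conjugates of the generators. -/
def IsCoxRefl (S : Set (Equiv.Perm ℤ)) (t : Equiv.Perm ℤ) : Prop :=
  ∃ w ∈ Subgroup.closure S, ∃ s ∈ S, t = w * s * w⁻¹

/-- The Bruhat order associated to the generating set `S`, as the reflexive-transitive
closure of the relation `u < t·u` for reflections `t` increasing the length. -/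
def bruhat (S : Set (Equiv.Perm ℤ)) : Equiv.Perm ℤ → Equiv.Perm ℤ → Prop :=
  Relation.ReflTransGen
    (fun u v => (∃ t, IsCoxRefl S t ∧ v = t * u) ∧ wordLen S u < wordLen S v)

/-- A signed permutation of `{-n,…,-1,1,…,n}`. -/
def IsSignedPerm (n : ℕ) (σ : Equiv.Perm ℤ) : Prop :=
  (∀ i : ℤ, σ (-i) = -σ i) ∧ ∀ i : ℤ, (n : ℤ) < |i| → σ i = i

def negCount (n : ℕ) (σ : Equiv.Perm ℤ) : ℕ :=
  ((Finset.Icc (1 : ℤ) (n : ℤ)).filter (fun i => σ i < 0)).card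

def invCount (n : ℕ) (σ : Equiv.Perm ℤ) : ℕ :=
  (((Finset.Icc (-(n : ℤ)) (n : ℤ)) ×ˢ (Finset.Icc (-(n : ℤ)) (n : ℤ))).filter
    (fun p => p.1 ≠ 0 ∧ p.2 ≠ 0 ∧ p.1 < p.2 ∧ σ p.2 < σ p.1)).card

/-- An even-signed permutation: an element of the Weyl group `D_n`. -/
def IsEvenSignedPerm (n : ℕ) (σ : Equiv.Perm ℤ) : Prop :=
  IsSignedPerm n σ ∧ Even (negCount n σ)

/-- The action of a signed permutation on a weight written in `ε`-coordinates,
where `σ · ε_j = ε_{σ(j)}` and `ε_{-k} = -ε_k`. -/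
def wAct (σ : Equiv.Perm ℤ) (χ : ℤ → ℚ) : ℤ → ℚ :=
  fun k => if 0 < σ⁻¹ k then χ (σ⁻¹ k) else -χ (-(σ⁻¹ k))

/-- `ε`-coordinates of the fundamental weight `ω_r` (types `B`/`C`, with the labeling
`s_1 = (1,-1)`; for `r = 1` this is the type-`C` normalization `ε_1 + ⋯ + ε_n`,
a positive multiple of the type-`B` one). -/
def omegaWt (n r : ℕ) : ℤ → ℚ := fun j => if (r : ℤ) ≤ j ∧ j ≤ (n : ℤ) then 1 else 0

/-- `ε`-coordinates of the fundamental weight `ω_r` of type `D_n`. -/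
def omegaWtD (n r : ℕ) : ℤ → ℚ :=
  if r = 1 then fun j => if 1 ≤ j ∧ j ≤ (n : ℤ) then 1 / 2 else 0
  else if r = 2 then fun j =>
    if j = 1 then -(1 / 2) else if 2 ≤ j ∧ j ≤ (n : ℤ) then 1 / 2 else 0
  else omegaWt n r

/-- `ε`-coordinates of the simple root `α_j = ε_j - ε_{j-1}` (valid for `j ≥ 2` in types
`B`/`C` and for `j ≥ 3` in type `D`). -/
def alphaGen (j : ℤ) : ℤ → ℚ :=
  fun t => (if t = j then 1 else 0) - (if t = j - 1 then 1 else 0)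

/-- `ε`-coordinates of the simple root `α_1 = ε_1 + ε_2` of type `D`. -/
def alphaD1 : ℤ → ℚ := fun t => (if t = 1 then 1 else 0) + (if t = 2 then 1 else 0)

/-- `ε`-coordinates of the simple root `α_2 = ε_2 - ε_1` of type `D`. -/
def alphaD2 : ℤ → ℚ := fun t => (if t = 2 then 1 else 0) - (if t = 1 then 1 else 0)

/-- `χ` is a nonnegative combination of the simple roots, type `B`/`C`. -/
def NonnegBC (n : ℕ) (χ : ℤ → ℚ) : Prop :=
  ∀ k ∈ Finset.Icc (1 : ℤ) (n : ℤ), 0 ≤ ∑ j ∈ Finset.Icc k (n : ℤ), χ j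

/-- `χ` is a nonpositive combination of the simple roots, type `B`/`C`. -/
def NonposBC (n : ℕ) (χ : ℤ → ℚ) : Prop :=
  ∀ k ∈ Finset.Icc (1 : ℤ) (n : ℤ), ∑ j ∈ Finset.Icc k (n : ℤ), χ j ≤ 0

/-- `χ` is a nonnegative combination of the simple roots, type `D`. -/
def NonnegD (n : ℕ) (χ : ℤ → ℚ) : Prop :=
  (∀ k ∈ Finset.Icc (3 : ℤ) (n : ℤ), 0 ≤ ∑ j ∈ Finset.Icc k (n : ℤ), χ j) ∧
    (0 ≤ ∑ j ∈ Finset.Icc (1 : ℤ) (n : ℤ), χ j) ∧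
    χ 1 ≤ ∑ j ∈ Finset.Icc (2 : ℤ) (n : ℤ), χ j

/-- `χ` is a nonpositive combination of the simple roots, type `D`. -/
def NonposD (n : ℕ) (χ : ℤ → ℚ) : Prop :=
  (∀ k ∈ Finset.Icc (3 : ℤ) (n : ℤ), ∑ j ∈ Finset.Icc k (n : ℤ), χ j ≤ 0) ∧
    (∑ j ∈ Finset.Icc (1 : ℤ) (n : ℤ), χ j ≤ 0) ∧
    ∑ j ∈ Finset.Icc (2 : ℤ) (n : ℤ), χ j ≤ χ 1

/-- `v ∈ W^{I_r}`: minimal length coset representative modulo the maximal parabolic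
subgroup omitting `s_r`, type `B`/`C`. -/
def IsMinRepB (n : ℕ) (r : ℤ) (v : Equiv.Perm ℤ) : Prop :=
  IsSignedPerm n v ∧
    ∀ u ∈ Subgroup.closure (bgen '' {i : ℤ | 1 ≤ i ∧ i ≤ (n : ℤ) ∧ i ≠ r}),
      wordLen (BGens n) v ≤ wordLen (BGens n) (v * u)

/-- `v ∈ W^{I_r}`: minimal length coset representative modulo the maximal parabolic
subgroup omitting `s_r`, type `D`. -/
def IsMinRepD (n : ℕ) (r : ℤ) (v : Equiv.Perm ℤ) : Prop :=
  IsEvenSignedPerm n v ∧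
    ∀ u ∈ Subgroup.closure (dgen '' {i : ℤ | 1 ≤ i ∧ i ≤ (n : ℤ) ∧ i ≠ r}),
      wordLen (DGens n) v ≤ wordLen (DGens n) (v * u)

/-- Nonemptiness of the `T`-semistable locus of the Richardson variety `X^v_w ⊆ G/P_r`
with respect to `L_r`, types `B`/`C`: by the standard monomial basis of
`H⁰(X^v_w, L_r)`, this holds iff there is a Bruhat chain `v = u_1 ≤ ⋯ ≤ u_k = w`
in `W^{I_r}` with `Σ_l u_l(ω_r) = 0`. -/
def SSNonemptyB (n r : ℕ) (v w : Equiv.Perm ℤ) : Prop :=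
  ∃ l : List (Equiv.Perm ℤ), l ≠ [] ∧ l.head? = some v ∧ l.getLast? = some w ∧
    l.Chain' (bruhat (BGens n)) ∧ (∀ u ∈ l, IsMinRepB n r u) ∧
    ∀ t : ℤ, (l.map (fun u => wAct u (omegaWt n r) t)).sum = 0

/-- Nonemptiness of the `T`-semistable locus of the Richardson variety, type `D`. -/
def SSNonemptyD (n r : ℕ) (v w : Equiv.Perm ℤ) : Prop :=
  ∃ l : List (Equiv.Perm ℤ), l ≠ [] ∧ l.head? = some v ∧ l.getLast? = some w ∧
    l.Chain' (bruhat (DGens n)) ∧ (∀ u ∈ l, IsMinRepD n r u) ∧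
    ∀ t : ℤ, (l.map (fun u => wAct u (omegaWtD n r) t)).sum = 0


/-!
Let `F σ` be the number of inversions of `σ`, viewed as a permutation of `±1, …, ±n`, plus the
number of negative entries among `σ 1, …, σ n`. Right multiplication by `s_i` changes `F` by `±2`,
lowering it exactly at a descent (`σ i < σ (i - 1)`, where `σ 0 = 0`); so the length is `F / 2`.
The inversions through `±n` alone show that `σ` has length at least `n - m` if `m = σ n > 0` and
`n - 1 - m` if `m < 0`, and the suffixes of the word `s_n ⋯ s_2 s_1 s_2 ⋯ s_n` attain these
bounds. A minimal coset representative has no descent at `s_1, …, s_{n-1}`, i.e.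
`0 < σ 1 < ⋯ < σ (n - 1)`, which pins it down by `σ n`. Hence `W^{I_n}` is the Bruhat chain of
these `2n` suffixes, the first `n` of which satisfy `σ n > 0`; `v` and `w` are the suffixes of
length `n - 1` and `n`.
-/

section

variable {n : ℕ} {σ τ : Perm ℤ}

namespace IsSignedPerm

theorem apply_zero (hσ : IsSignedPerm n σ) : σ 0 = 0 := by
  have := hσ.1 0
  simp only [neg_zero] at this
  omega

theorem apply_ne_zero (hσ : IsSignedPerm n σ) {k : ℤ} (hk : k ≠ 0) : σ k ≠ 0 :=
  fun h => hk (σ.injective (h.trans hσ.apply_zero.symm))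

theorem abs_apply_le (hσ : IsSignedPerm n σ) {k : ℤ} (hk : |k| ≤ n) : |σ k| ≤ n := by
  by_contra! h
  have : σ k = k := σ.injective (hσ.2 _ h)
  rw [this] at h
  omega

theorem mul (hσ : IsSignedPerm n σ) (hτ : IsSignedPerm n τ) : IsSignedPerm n (σ * τ) :=
  ⟨fun i => by simp only [Perm.mul_apply, hτ.1, hσ.1],
    fun i hi => by simp only [Perm.mul_apply, hτ.2 i hi, hσ.2 i hi]⟩

theorem inv (hσ : IsSignedPerm n σ) : IsSignedPerm n σ⁻¹ :=
  ⟨fun i => σ.injective (by simp only [Perm.coe_inv, apply_symm_apply, hσ.1]),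
    fun i hi => σ.injective (by simp only [Perm.coe_inv, apply_symm_apply, hσ.2 i hi])⟩

theorem ext_of_Icc (hσ : IsSignedPerm n σ) (hτ : IsSignedPerm n τ)
    (h : ∀ k : ℤ, 1 ≤ k → k ≤ n → σ k = τ k) : σ = τ := by
  have hnonneg : ∀ k : ℤ, 0 ≤ k → σ k = τ k := by
    intro k hk
    rcases eq_or_lt_of_le hk with rfl | hk
    · rw [hσ.apply_zero, hτ.apply_zero]
    by_cases hkn : k ≤ n
    · exact h k hk hkn
    · rw [hσ.2 k (by rw [abs_of_pos hk]; omega), hτ.2 k (by rw [abs_of_pos hk]; omega)]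
  ext k
  rcases le_total 0 k with hk | hk
  · exact hnonneg k hk
  · rw [← neg_neg k, hσ.1, hτ.1, hnonneg (-k) (by omega)]

end IsSignedPerm

theorem isSignedPerm_one (n : ℕ) : IsSignedPerm n 1 :=
  ⟨fun _ => rfl, fun _ _ => rfl⟩

theorem bgen_one_apply (x : ℤ) : bgen 1 x = if x = 1 then -1 else if x = -1 then 1 else x := by
  rw [bgen, if_pos rfl, swap_apply_def]

theorem bgen_apply {i : ℤ} (hi : 2 ≤ i) (x : ℤ) :
    bgen i x = if x = i - 1 then i else if x = i then i - 1 else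
      if x = -(i - 1) then -i else if x = -i then -(i - 1) else x := by
  rw [bgen, if_neg (by omega), tswap, Perm.mul_apply, swap_apply_def, swap_apply_def]
  split_ifs <;> omega

theorem bgen_apply_of_lt_abs {i x : ℤ} (hi : 1 ≤ i) (hx : i < |x|) : bgen i x = x := by
  rw [abs_eq_max_neg] at hx
  rcases eq_or_lt_of_le hi with rfl | hi
  · rw [bgen_one_apply]; split_ifs <;> omega
  · rw [bgen_apply hi]; split_ifs <;> omega

theorem isSignedPerm_bgen {i : ℤ} (h1 : 1 ≤ i) (hi : i ≤ n) : IsSignedPerm n (bgen i) := by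
  refine ⟨fun x => ?_, fun x hx => bgen_apply_of_lt_abs h1 (hi.trans_lt hx)⟩
  rcases eq_or_lt_of_le h1 with rfl | h2
  · simp only [bgen_one_apply]; split_ifs <;> omega
  · simp only [bgen_apply h2]; split_ifs <;> omega

theorem bgen_mul_self {i : ℤ} (hi : 1 ≤ i) : bgen i * bgen i = 1 := by
  ext x
  rcases eq_or_lt_of_le hi with rfl | h2
  · rw [Perm.mul_apply, Perm.one_apply, bgen_one_apply (bgen 1 x), bgen_one_apply x]
    grind
  · rw [Perm.mul_apply, Perm.one_apply, bgen_apply h2 (bgen i x), bgen_apply h2 x]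
    split_ifs <;> omega

theorem isSignedPerm_list_prod {l : List (Perm ℤ)} (hl : ∀ x ∈ l, x ∈ BGens n) :
    IsSignedPerm n l.prod := by
  induction l with
  | nil => exact isSignedPerm_one n
  | cons x l ih =>
    obtain ⟨i, ⟨h1, hi⟩, rfl⟩ := hl x (List.mem_cons_self ..)
    exact (isSignedPerm_bgen h1 hi).mul (ih fun y hy => hl y (List.mem_cons_of_mem _ hy))

def inversions (n : ℕ) (σ : Perm ℤ) : Finset (ℤ × ℤ) :=
  ((Icc (-(n : ℤ)) n) ×ˢ (Icc (-(n : ℤ)) n)).filter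
    (fun p => p.1 ≠ 0 ∧ p.2 ≠ 0 ∧ p.1 < p.2 ∧ σ p.2 < σ p.1)

theorem invCount_eq_card (n : ℕ) (σ : Perm ℤ) : invCount n σ = #(inversions n σ) := rfl

theorem mem_inversions {x y : ℤ} :
    (x, y) ∈ inversions n σ ↔
      (-(n : ℤ) ≤ x ∧ x ≤ n) ∧ (-(n : ℤ) ≤ y ∧ y ≤ n) ∧ x ≠ 0 ∧ y ≠ 0 ∧ x < y ∧ σ y < σ x := by
  simp only [inversions, mem_filter, mem_product, Finset.mem_Icc, and_assoc]

theorem invCount_one (n : ℕ) : invCount n 1 = 0 :=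
  card_eq_zero.2 <| filter_false_of_mem fun p _ h => by
    simp only [Perm.one_apply] at h; omega

theorem negCount_one (n : ℕ) : negCount n 1 = 0 :=
  card_eq_zero.2 <| filter_false_of_mem fun k hk h => by
    rw [Finset.mem_Icc] at hk; rw [Perm.one_apply] at h; omega

/-- Right multiplication by the transposition of two neighbours `p < q` of `{±1, …, ±n}` toggles
exactly the pair `(p, q)`. -/
theorem invCount_mul_swap (σ : Perm ℤ) {p q : ℤ} (hpq : q = p + 1 ∨ p = -1 ∧ q = 1)
    (hp : p ≠ 0) (hq : q ≠ 0) (hpn : -(n : ℤ) ≤ p) (hqn : q ≤ n) :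
    invCount n (σ * swap p q) + (if σ q < σ p then 1 else 0) =
      invCount n σ + (if σ q < σ p then 0 else 1) := by
  set s := swap p q
  have hs : ∀ x, s (s x) = x := swap_apply_self p q
  have hmem : ∀ x y, (x, y) ∈ (inversions n σ).erase (p, q) ↔
      (s x, s y) ∈ (inversions n (σ * s)).erase (p, q) := by
    intro x y
    simp only [mem_erase, mem_inversions, Perm.mul_apply, hs, ne_eq, Prod.mk.injEq]
    simp only [s, swap_apply_def]
    split_ifs <;> omega
  have hcard : #((inversions n (σ * s)).erase (p, q)) = #((inversions n σ).erase (p, q)) :=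
    card_nbij' (fun a => (s a.1, s a.2)) (fun a => (s a.1, s a.2))
      (fun a ha => (hmem _ _).2 (by simpa only [hs, mem_coe] using ha))
      (fun a ha => (hmem _ _).1 (by simpa only [mem_coe] using ha))
      (fun a _ => by simp only [hs]) (fun a _ => by simp only [hs])
  have hne : σ p ≠ σ q := fun h => by have := σ.injective h; omega
  have h₁ : (p, q) ∈ inversions n (σ * s) ↔ σ p < σ q := by
    simp only [mem_inversions, Perm.mul_apply, s, swap_apply_left, swap_apply_right]; omega
  have h₂ : (p, q) ∈ inversions n σ ↔ σ q < σ p := by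
    simp only [mem_inversions]; omega
  rw [invCount_eq_card, invCount_eq_card]
  by_cases hlt : σ q < σ p
  · rw [erase_eq_of_notMem (mt h₁.1 (by omega))] at hcard
    rw [← card_erase_add_one (h₂.2 hlt), hcard]
    simp only [hlt, if_true]
  · rw [erase_eq_of_notMem (mt h₂.1 hlt)] at hcard
    rw [← card_erase_add_one (h₁.2 (by omega)), ← hcard]
    simp only [hlt, if_false]

theorem negCount_mul_bgen (σ : Perm ℤ) {i : ℤ} (h2 : 2 ≤ i) (hi : i ≤ n) :
    negCount n (σ * bgen i) = negCount n σ := by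
  have hb : ∀ k, bgen i (bgen i k) = k := fun k => by
    rw [← Perm.mul_apply, bgen_mul_self (by omega), Perm.one_apply]
  have hIcc : ∀ k, (1 ≤ bgen i k ∧ bgen i k ≤ n) ↔ (1 ≤ k ∧ k ≤ n) := fun k => by
    rw [bgen_apply h2]; split_ifs <;> omega
  rw [negCount, negCount]
  refine card_nbij' (bgen i) (bgen i) ?_ ?_ (fun k _ => ?_) (fun k _ => ?_)
  · intro k hk
    simp only [mem_coe, mem_filter, Finset.mem_Icc] at hk ⊢
    rw [Perm.mul_apply] at hk
    exact ⟨(hIcc k).2 hk.1, hk.2⟩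
  · intro k hk
    simp only [mem_coe, mem_filter, Finset.mem_Icc] at hk ⊢
    rw [Perm.mul_apply, hb]
    exact ⟨(hIcc k).2 hk.1, hk.2⟩
  all_goals exact hb k

theorem negCount_mul_bgen_one (σ : Perm ℤ) (hn : 1 ≤ n) :
    negCount n (σ * bgen 1) + (if σ 1 < 0 then 1 else 0) =
      negCount n σ + (if σ (-1) < 0 then 1 else 0) := by
  have hsplit : ∀ τ : Perm ℤ,
      negCount n τ = #((Icc 2 (n : ℤ)).filter fun k => τ k < 0) + if τ 1 < 0 then 1 else 0 := by
    intro τ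
    have hI : Icc (1 : ℤ) n = insert (1 : ℤ) (Icc 2 (n : ℤ)) := by
      ext x; simp only [Finset.mem_Icc, mem_insert]; omega
    rw [negCount, hI, filter_insert]
    split_ifs
    · rw [card_insert_of_notMem (by simp)]
    · rfl
  have hfix : ∀ k ∈ Icc (2 : ℤ) n, (σ * bgen 1) k = σ k := fun k hk => by
    rw [Finset.mem_Icc] at hk
    rw [Perm.mul_apply, bgen_one_apply, if_neg (by omega), if_neg (by omega)]
  have h1 : (σ * bgen 1) 1 = σ (-1) := by rw [Perm.mul_apply, bgen_one_apply, if_pos rfl]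
  rw [hsplit, hsplit σ, filter_congr fun k hk => by rw [hfix k hk], h1]
  omega

/-- For `i = 1` the descent condition reads `σ 1 < σ 0 = 0`. -/
theorem invCount_add_negCount_mul_bgen (hσ : IsSignedPerm n σ) {i : ℤ} (h1 : 1 ≤ i)
    (hi : i ≤ n) :
    invCount n (σ * bgen i) + negCount n (σ * bgen i) + 2 * (if σ i < σ (i - 1) then 1 else 0) =
      invCount n σ + negCount n σ + 2 * (if σ i < σ (i - 1) then 0 else 1) := by
  rcases eq_or_lt_of_le h1 with rfl | h2
  · have hinv := invCount_mul_swap (n := n) σ (p := -1) (q := 1) (Or.inr ⟨rfl, rfl⟩)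
      (by norm_num) one_ne_zero (by omega) (by omega)
    have hneg := negCount_mul_bgen_one (n := n) σ (by omega)
    have h0 : σ 1 ≠ 0 := hσ.apply_ne_zero one_ne_zero
    rw [← show bgen 1 = swap (-1) 1 by rw [bgen, if_pos rfl, swap_comm], hσ.1] at hinv
    rw [hσ.1] at hneg
    rw [sub_self, hσ.apply_zero]
    split_ifs at hinv hneg ⊢ <;> omega
  · have hb : σ * bgen i = σ * swap (i - 1) i * swap (-i) (-(i - 1)) := by
      rw [bgen, if_neg (by omega), tswap, swap_comm (-i), mul_assoc]
    have hinv₁ := invCount_mul_swap (n := n) σ (p := i - 1) (q := i) (Or.inl (by omega))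
      (by omega) (by omega) (by omega) hi
    have hinv₂ := invCount_mul_swap (n := n) (σ * swap (i - 1) i) (p := -i) (q := -(i - 1))
      (Or.inl (by omega)) (by omega) (by omega) (by omega) (by omega)
    have hσ' : ∀ x, x ≠ i - 1 → x ≠ i → (σ * swap (i - 1) i) x = σ x := fun x hx hx' => by
      rw [Perm.mul_apply, swap_apply_of_ne_of_ne hx hx']
    rw [← hb, hσ' _ (by omega) (by omega), hσ' _ (by omega) (by omega), hσ.1, hσ.1] at hinv₂
    rw [negCount_mul_bgen σ h2 hi]
    split_ifs at hinv₁ hinv₂ ⊢ <;> omega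

theorem invCount_add_negCount_list_prod_le {l : List (Perm ℤ)} (hl : ∀ x ∈ l, x ∈ BGens n) :
    invCount n l.prod + negCount n l.prod ≤ 2 * l.length := by
  induction l using List.reverseRecOn with
  | nil => simp [invCount_one, negCount_one]
  | append_singleton l s ih =>
    have hl' : ∀ x ∈ l, x ∈ BGens n := fun x hx => hl x (List.mem_append_left _ hx)
    obtain ⟨i, ⟨h1, hi⟩, rfl⟩ := hl s (List.mem_append_right _ (List.mem_singleton_self _))
    have := invCount_add_negCount_mul_bgen (isSignedPerm_list_prod hl') h1 hi
    have := ih hl'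
    rw [List.prod_append, List.prod_singleton, List.length_append, List.length_singleton]
    split_ifs at * <;> omega

theorem monotoneOn_sub_self_of_lt_add_one {f : ℤ → ℤ} {a b : ℤ}
    (hf : ∀ k, a ≤ k → k < b → f k < f (k + 1)) : MonotoneOn (fun k => f k - k) (Set.Icc a b) :=
  monotoneOn_of_le_succ Set.ordConnected_Icc fun k _ hk hk' => by
    simp only [Order.succ_eq_add_one, Set.mem_Icc] at hk hk' ⊢
    have := hf k hk.1 (by omega)
    omega

namespace IsSignedPerm

theorem exists_descent (hσ : IsSignedPerm n σ) (h : σ ≠ 1) :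
    ∃ i : ℤ, 1 ≤ i ∧ i ≤ n ∧ σ i < σ (i - 1) := by
  by_contra! hasc
  have hmono := monotoneOn_sub_self_of_lt_add_one (f := σ) (a := 0) (b := n) fun k hk hkn =>
    lt_of_le_of_ne (by simpa using hasc (k + 1) (by omega) (by omega))
      (fun h => by have := σ.injective h; omega)
  have hσn : σ n ≤ n := (abs_le.1 (hσ.abs_apply_le (by simp))).2
  refine h (hσ.ext_of_Icc (isSignedPerm_one n) fun k hk hkn => ?_)
  have hk' : k ∈ Set.Icc 0 (n : ℤ) := ⟨by omega, hkn⟩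
  have h0 := hmono (Set.left_mem_Icc.2 (by omega)) hk' (by omega)
  have h1 := hmono hk' (Set.right_mem_Icc.2 (by omega)) hkn
  simp only [hσ.apply_zero] at h0 h1
  rw [Perm.one_apply]
  omega

theorem exists_word (hσ : IsSignedPerm n σ) :
    ∃ l : List (Perm ℤ), (∀ x ∈ l, x ∈ BGens n) ∧ l.prod = σ ∧
      2 * l.length ≤ invCount n σ + negCount n σ := by
  induction h : invCount n σ + negCount n σ using Nat.strong_induction_on generalizing σ with
  | _ N ih =>
  by_cases h1 : σ = 1
  · exact ⟨[], by simp, by simp [h1], by simp⟩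
  obtain ⟨i, hi1, hin, hdesc⟩ := hσ.exists_descent h1
  have hF := invCount_add_negCount_mul_bgen hσ hi1 hin
  rw [if_pos hdesc, if_pos hdesc] at hF
  obtain ⟨l, hl, hprod, hlen⟩ := ih _ (by omega) (hσ.mul (isSignedPerm_bgen hi1 hin)) rfl
  refine ⟨l ++ [bgen i], fun x hx => ?_, ?_, ?_⟩
  · rcases List.mem_append.1 hx with hx | hx
    · exact hl x hx
    · exact List.mem_singleton.1 hx ▸ ⟨i, ⟨hi1, hin⟩, rfl⟩
  · rw [List.prod_append, hprod, List.prod_singleton, mul_assoc, bgen_mul_self hi1, mul_one]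
  · rw [List.length_append, List.length_singleton]
    omega

theorem two_mul_wordLen (hσ : IsSignedPerm n σ) :
    2 * wordLen (BGens n) σ = invCount n σ + negCount n σ := by
  obtain ⟨l, hl, hprod, hlen⟩ := hσ.exists_word
  have h₁ : wordLen (BGens n) σ ≤ l.length := Nat.sInf_le ⟨l, rfl, hl, hprod⟩
  obtain ⟨l₀, hlen₀, hl₀, hprod₀⟩ : wordLen (BGens n) σ ∈
      {k | ∃ l : List (Perm ℤ), l.length = k ∧ (∀ x ∈ l, x ∈ BGens n) ∧ l.prod = σ} :=
    Nat.sInf_mem ⟨_, l, rfl, hl, hprod⟩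
  have h₂ := invCount_add_negCount_list_prod_le hl₀
  rw [hprod₀, hlen₀] at h₂
  omega

/-- Every `x ∈ {±1, …, ±(n - 1)}` with `σ n < σ x` yields the two inversions `(x, n)` and
`(-n, -x)`; if `σ n < 0` there is also the inversion `(-n, n)`. -/
theorem two_mul_card_add_le_invCount (hσ : IsSignedPerm n σ) (hn : 1 ≤ n) :
    2 * #((Icc (1 - n : ℤ) (n - 1)).filter fun x => x ≠ 0 ∧ σ n < σ x) +
      (if σ n < 0 then 1 else 0) ≤ invCount n σ := by
  set A := (Icc (1 - n : ℤ) (n - 1)).filter fun x => x ≠ 0 ∧ σ n < σ x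
  have hA : ∀ x ∈ A, 1 - (n : ℤ) ≤ x ∧ x ≤ n - 1 ∧ x ≠ 0 ∧ σ n < σ x := fun x hx => by
    simpa only [A, mem_filter, Finset.mem_Icc, and_assoc] using hx
  set f₁ : ℤ → ℤ × ℤ := fun x => (x, n)
  set f₂ : ℤ → ℤ × ℤ := fun x => (-(n : ℤ), -x)
  have hsub : A.image f₁ ∪ A.image f₂ ⊆ inversions n σ := by
    intro p hp
    rcases mem_union.1 hp with hp | hp <;> obtain ⟨x, hx, rfl⟩ := mem_image.1 hp <;>
      have := hA x hx <;> simp only [f₁, f₂, mem_inversions, hσ.1] <;> omega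
  have hdisj : Disjoint (A.image f₁) (A.image f₂) := by
    refine disjoint_left.2 fun p hp₁ hp₂ => ?_
    obtain ⟨x, hx, rfl⟩ := mem_image.1 hp₁
    obtain ⟨x', -, hx'⟩ := mem_image.1 hp₂
    have := hA x hx
    simp only [f₁, f₂, Prod.mk.injEq] at hx'
    omega
  have hcard : #(A.image f₁ ∪ A.image f₂) = 2 * #A := by
    rw [card_union_of_disjoint hdisj, card_image_of_injective _ fun x y h => (Prod.mk.inj h).1,
      card_image_of_injective _ fun x y h => neg_injective (Prod.mk.inj h).2]
    ring
  rw [invCount_eq_card]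
  split_ifs with hneg
  · have hnot : (-(n : ℤ), (n : ℤ)) ∉ A.image f₁ ∪ A.image f₂ := fun hp => by
      rcases mem_union.1 hp with hp | hp <;> obtain ⟨x, hx, hx'⟩ := mem_image.1 hp <;>
        have := hA x hx <;> simp only [f₁, f₂, Prod.mk.injEq] at hx' <;> omega
    have := card_le_card <|
      insert_subset (by simp only [mem_inversions, hσ.1]; omega : (-(n : ℤ), (n : ℤ)) ∈ _) hsub
    rwa [card_insert_of_notMem hnot, hcard] at this
  · simpa [hcard] using card_le_card hsub

end IsSignedPerm

/-- The suffix of length `j` of the word `s_n ⋯ s_2 s_1 s_2 ⋯ s_n`. -/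
def minRepWord (n : ℕ) : ℕ → List (Perm ℤ)
  | 0 => []
  | j + 1 => bgen (|(n : ℤ) - 1 - j| + 1) :: minRepWord n j

def minRep (n j : ℕ) : Perm ℤ := (minRepWord n j).prod

/-- The image of `n` under `minRep n j`, for `j < 2 * n`. -/
def repValue (n j : ℕ) : ℤ := if j < n then n - j else n - 1 - j

/-- `σ⁻¹` injects the values `y ∈ (σ n, n]` other than `0` and `-σ n` into the positions counted
in `two_mul_card_add_le_invCount`; there are `n - σ n` of them if `σ n > 0`, and `n - σ n - 2`
if `σ n < 0`. -/
theorem IsSignedPerm.two_mul_le_invCount_add_negCount (hσ : IsSignedPerm n σ) {j : ℕ}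
    (hj : j < 2 * n) (h : σ n = repValue n j) : 2 * j ≤ invCount n σ + negCount n σ := by
  have hinv := hσ.two_mul_card_add_le_invCount (by omega)
  have hm := abs_le.1 (hσ.abs_apply_le (k := n) (by simp))
  have hY : #(((Icc (σ n + 1) (n : ℤ)).erase 0).erase (-σ n)) ≤
      #((Icc (1 - n : ℤ) (n - 1)).filter fun x => x ≠ 0 ∧ σ n < σ x) := by
    refine card_le_card_of_injOn (fun y => σ⁻¹ y) (fun y hy => ?_) σ⁻¹.injective.injOn
    simp only [mem_coe, mem_erase, Finset.mem_Icc, mem_filter] at hy ⊢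
    have hσy : σ (σ⁻¹ y) = y := σ.apply_symm_apply y
    have habs := abs_le.1 (hσ.inv.abs_apply_le (k := y) (abs_le.2 ⟨by omega, hy.2.2.2⟩))
    have h₁ : σ⁻¹ y ≠ n := fun h => by rw [h] at hσy; omega
    have h₂ : σ⁻¹ y ≠ -n := fun h => by rw [h, hσ.1] at hσy; omega
    exact ⟨⟨by omega, by omega⟩, hσ.inv.apply_ne_zero hy.2.1, by omega⟩
  have hneg : (if σ n < 0 then 1 else 0) ≤ negCount n σ := by
    split_ifs with hlt
    · exact card_pos.2 ⟨n, mem_filter.2 ⟨Finset.mem_Icc.2 ⟨by omega, le_rfl⟩, hlt⟩⟩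
    · exact Nat.zero_le _
  unfold repValue at h
  split_ifs at h with hjn
  · rw [h, if_neg (by omega)] at hinv
    rw [h, erase_eq_of_notMem (by simp only [mem_erase, Finset.mem_Icc]; omega),
      erase_eq_of_notMem (by rw [Finset.mem_Icc]; omega), Int.card_Icc] at hY
    omega
  · rw [h, if_pos (by omega)] at hinv hneg
    rw [h, card_erase_of_mem (by simp only [mem_erase, Finset.mem_Icc]; omega),
      card_erase_of_mem (by simp only [Finset.mem_Icc]; omega), Int.card_Icc] at hY
    omega

section minRep

variable {j : ℕ}

theorem minRep_succ : minRep n (j + 1) = bgen (|(n : ℤ) - 1 - j| + 1) * minRep n j :=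
  List.prod_cons

theorem length_minRepWord : (minRepWord n j).length = j := by
  induction j with
  | zero => rfl
  | succ j ih => rw [minRepWord, List.length_cons, ih]

theorem mem_BGens_of_mem_minRepWord (hj : j < 2 * n) : ∀ x ∈ minRepWord n j, x ∈ BGens n := by
  induction j with
  | zero => simp [minRepWord]
  | succ j ih =>
    intro x hx
    rcases List.mem_cons.1 hx with rfl | hx
    · have : |(n : ℤ) - 1 - j| ≤ n - 1 := abs_le.2 ⟨by omega, by omega⟩
      exact ⟨_, ⟨by have := abs_nonneg ((n : ℤ) - 1 - j); omega, by omega⟩, rfl⟩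
    · exact ih (by omega) x hx

theorem isSignedPerm_minRep (hj : j < 2 * n) : IsSignedPerm n (minRep n j) :=
  isSignedPerm_list_prod (mem_BGens_of_mem_minRepWord hj)

theorem minRep_apply_self (hj : j < 2 * n) : minRep n j n = repValue n j := by
  induction j with
  | zero => simp only [minRep, minRepWord, List.prod_nil, Perm.one_apply, repValue]; simp; omega
  | succ j ih =>
    rw [minRep_succ, Perm.mul_apply, ih (by omega)]
    unfold repValue
    rcases lt_trichotomy (j : ℤ) (n - 1) with h | h | h
    · rw [abs_of_pos (by omega), bgen_apply (by omega)]
      split_ifs <;> omega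
    · rw [show |(n : ℤ) - 1 - j| + 1 = 1 by rw [abs_eq_zero.2 (by omega)]; rfl, bgen_one_apply]
      split_ifs <;> omega
    · rw [abs_of_neg (by omega), bgen_apply (by omega)]
      split_ifs <;> omega

theorem minRep_self (hn : 1 ≤ n) : minRep n n = bgen 1 * minRep n (n - 1) := by
  obtain ⟨m, rfl⟩ := Nat.exists_eq_add_of_le' hn
  rw [Nat.add_sub_cancel, minRep_succ]
  norm_num

theorem wordLen_minRep (hj : j < 2 * n) : wordLen (BGens n) (minRep n j) = j := by
  have hle : wordLen (BGens n) (minRep n j) ≤ j :=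
    Nat.sInf_le ⟨_, length_minRepWord, mem_BGens_of_mem_minRepWord hj, rfl⟩
  have := (isSignedPerm_minRep hj).two_mul_le_invCount_add_negCount hj (minRep_apply_self hj)
  rw [← (isSignedPerm_minRep hj).two_mul_wordLen] at this
  omega

theorem isSignedPerm_and_apply_self_of_mem_closure {u : Perm ℤ}
    (hu : u ∈ Subgroup.closure (bgen '' {i : ℤ | 1 ≤ i ∧ i ≤ n ∧ i ≠ n})) :
    IsSignedPerm n u ∧ u n = n := by
  induction hu using Subgroup.closure_induction with
  | mem x hx =>
    obtain ⟨i, ⟨h1, hi, hin⟩, rfl⟩ := hx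
    refine ⟨isSignedPerm_bgen h1 hi, bgen_apply_of_lt_abs h1 ?_⟩
    rw [abs_of_nonneg (by omega)]
    omega
  | one => exact ⟨isSignedPerm_one n, rfl⟩
  | mul x y _ _ hx hy => exact ⟨hx.1.mul hy.1, by rw [Perm.mul_apply, hy.2, hx.2]⟩
  | inv x _ hx => exact ⟨hx.1.inv, by rw [Perm.inv_eq_iff_eq, hx.2]⟩

theorem isMinRepB_minRep (hj : j < 2 * n) : IsMinRepB n n (minRep n j) := by
  refine ⟨isSignedPerm_minRep hj, fun u hu => ?_⟩
  obtain ⟨hu, hun⟩ := isSignedPerm_and_apply_self_of_mem_closure hu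
  have hσu := (isSignedPerm_minRep hj).mul hu
  have := hσu.two_mul_le_invCount_add_negCount hj
    (by rw [Perm.mul_apply, hun, minRep_apply_self hj])
  rw [← hσu.two_mul_wordLen] at this
  rw [wordLen_minRep hj]
  omega

end minRep

/-- `k = 0` gives `0 < u 1`, since `u 0 = 0`. -/
theorem IsMinRepB.apply_lt_apply_add_one {u : Perm ℤ} (hu : IsMinRepB n n u) {k : ℤ}
    (hk : 0 ≤ k) (hkn : k + 1 < n) : u k < u (k + 1) := by
  by_contra! hdesc
  have hdesc : u (k + 1) < u (k + 1 - 1) := by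
    rw [add_sub_cancel_right]
    exact lt_of_le_of_ne hdesc fun h => by have := u.injective h; omega
  have hF := invCount_add_negCount_mul_bgen hu.1 (i := k + 1) (by omega) (by omega)
  rw [if_pos hdesc, if_pos hdesc, ← hu.1.two_mul_wordLen,
    ← (hu.1.mul (isSignedPerm_bgen (by omega) (by omega))).two_mul_wordLen] at hF
  have := hu.2 _ (Subgroup.subset_closure ⟨k + 1, ⟨by omega, by omega, by omega⟩, rfl⟩)
  omega

namespace IsSignedPerm

/-- `k ↦ σ k - k` is monotone on `[0, n - 1]` with values in `{0, 1}`, and it cannot stay at `0`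
past `|σ n|`, nor be `1` before it, because `σ` never takes the value `|σ n|` there. -/
theorem apply_eq_of_lt_apply_add_one (hσ : IsSignedPerm n σ)
    (hmono : ∀ k : ℤ, 0 ≤ k → k + 1 < n → σ k < σ (k + 1)) {k : ℤ} (hk : 1 ≤ k) (hkn : k < n) :
    σ k = if k < |σ n| then k else k + 1 := by
  have hg := monotoneOn_sub_self_of_lt_add_one (f := σ) (a := 0) (b := n - 1)
    fun k hk hk' => hmono k hk (by omega)
  have hmem : ∀ x : ℤ, 0 ≤ x → x ≤ n - 1 → x ∈ Set.Icc (0 : ℤ) (n - 1) := fun x h h' => ⟨h, h'⟩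
  have ha : |σ n| ≤ n := hσ.abs_apply_le (by simp)
  have ha₀ : 0 < |σ n| := abs_pos.2 (hσ.apply_ne_zero (by omega))
  have hσn₁ := abs_le.1 (hσ.abs_apply_le (k := n - 1) (abs_le.2 ⟨by omega, by omega⟩))
  have hne : ∀ k : ℤ, 1 ≤ k → k < n → σ k ≠ |σ n| := fun k hk hkn h => by
    rcases abs_choice (σ n) with h' | h'
    · have := σ.injective (h.trans h'); omega
    · have := σ.injective (h.trans (h'.trans (hσ.1 n).symm)); omega
  have h0 : σ 0 - 0 ≤ σ k - k := hg (hmem 0 le_rfl (by omega)) (hmem k (by omega) (by omega))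
    (by omega)
  have h1 : σ k - k ≤ σ (n - 1) - (n - 1) :=
    hg (hmem k (by omega) (by omega)) (hmem _ (by omega) le_rfl) (by omega)
  rw [hσ.apply_zero] at h0
  split_ifs with hka
  · have h2 : σ k - k ≤ σ (|σ n| - 1) - (|σ n| - 1) :=
      hg (hmem k (by omega) (by omega)) (hmem _ (by omega) (by omega)) (by omega)
    have h3 : σ (|σ n| - 1) - (|σ n| - 1) ≤ σ (n - 1) - (n - 1) :=
      hg (hmem _ (by omega) (by omega)) (hmem _ (by omega) le_rfl) (by omega)
    have := hne (|σ n| - 1) (by omega) (by omega)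
    omega
  · have h2 : σ 0 - 0 ≤ σ |σ n| - |σ n| :=
      hg (hmem 0 le_rfl (by omega)) (hmem _ (by omega) (by omega)) (by omega)
    have h3 : σ |σ n| - |σ n| ≤ σ k - k :=
      hg (hmem _ (by omega) (by omega)) (hmem k (by omega) (by omega)) (by omega)
    have := hne |σ n| (by omega) (by omega)
    rw [hσ.apply_zero] at h2
    omega

theorem eq_of_lt_apply_add_one (hσ : IsSignedPerm n σ) (hτ : IsSignedPerm n τ)
    (hσm : ∀ k : ℤ, 0 ≤ k → k + 1 < n → σ k < σ (k + 1))
    (hτm : ∀ k : ℤ, 0 ≤ k → k + 1 < n → τ k < τ (k + 1)) (h : σ n = τ n) : σ = τ := by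
  refine hσ.ext_of_Icc hτ fun k hk hkn => ?_
  rcases hkn.eq_or_lt with rfl | hkn
  · exact h
  · rw [hσ.apply_eq_of_lt_apply_add_one hσm hk hkn, hτ.apply_eq_of_lt_apply_add_one hτm hk hkn, h]

theorem eq_minRep_of_apply_eq_add_one (hσ : IsSignedPerm n σ)
    (h : ∀ k : ℤ, 1 ≤ k → k ≤ n - 1 → σ k = k + 1) {j : ℕ} (hj : j < 2 * n)
    (hσn : σ n = repValue n j) : σ = minRep n j := by
  refine hσ.eq_of_lt_apply_add_one (isSignedPerm_minRep hj) (fun k hk hkn => ?_)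
    (fun _ => (isMinRepB_minRep hj).apply_lt_apply_add_one) (by rw [hσn, minRep_apply_self hj])
  rcases hk.eq_or_lt with rfl | hk
  · rw [hσ.apply_zero, zero_add, h 1 le_rfl (by omega)]; omega
  · rw [h k hk (by omega), h (k + 1) (by omega) (by omega)]; omega

end IsSignedPerm

theorem exists_repValue_eq {m : ℤ} (hm0 : m ≠ 0) (hm : |m| ≤ n) :
    ∃ j < 2 * n, repValue n j = m := by
  rw [abs_le] at hm
  rcases lt_or_gt_of_ne hm0 with hm' | hm'
  · exact ⟨(n - 1 - m).toNat, by omega, by unfold repValue; split_ifs <;> omega⟩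
  · exact ⟨(n - m).toNat, by omega, by unfold repValue; split_ifs <;> omega⟩

theorem IsMinRepB.exists_eq_minRep {u : Perm ℤ} (hu : IsMinRepB n n u) (hn : 1 ≤ n) :
    ∃ j < 2 * n, u = minRep n j := by
  obtain ⟨j, hj, hju⟩ := exists_repValue_eq (hu.1.apply_ne_zero (by omega))
    (hu.1.abs_apply_le (k := n) (by simp))
  exact ⟨j, hj, hu.1.eq_of_lt_apply_add_one (isSignedPerm_minRep hj)
    (fun _ => hu.apply_lt_apply_add_one) (fun _ => (isMinRepB_minRep hj).apply_lt_apply_add_one)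
    (by rw [minRep_apply_self hj, hju])⟩

theorem bruhat.eq_or_wordLen_lt {S : Set (Perm ℤ)} {x y : Perm ℤ} (h : bruhat S x y) :
    x = y ∨ wordLen S x < wordLen S y := by
  induction h with
  | refl => exact Or.inl rfl
  | tail _ hyz ih =>
    rcases ih with rfl | hlt
    · exact Or.inr hyz.2
    · exact Or.inr (hlt.trans hyz.2)

theorem bruhat_minRep_of_le {j k : ℕ} (hjk : j ≤ k) (hk : k < 2 * n) :
    bruhat (BGens n) (minRep n j) (minRep n k) := by
  induction k, hjk using Nat.le_induction with
  | base => exact Relation.ReflTransGen.refl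
  | succ k hjk ih =>
    have hs := mem_BGens_of_mem_minRepWord hk _ (List.mem_cons_self ..)
    refine (ih (by omega)).tail ⟨⟨_, ⟨1, Subgroup.one_mem _, _, hs, by group⟩, minRep_succ⟩, ?_⟩
    rw [wordLen_minRep (by omega), wordLen_minRep hk]
    omega

section weight

variable {u : Perm ℤ}

theorem wAct_omegaWt (hu : IsSignedPerm n u) (hn : 1 ≤ n) (t : ℤ) :
    wAct u (omegaWt n n) t = (if t = u n then 1 else 0) - (if t = -u n then 1 else 0) := by
  obtain ⟨x, rfl⟩ := u.surjective t
  simp only [wAct, omegaWt, Perm.coe_inv, symm_apply_apply, ← hu.1, u.injective.eq_iff]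
  split_ifs <;> first | omega | norm_num

theorem sum_Icc_wAct_omegaWt (hu : IsSignedPerm n u) (hn : 1 ≤ n) (k : ℤ) :
    ∑ j ∈ Icc k n, wAct u (omegaWt n n) j =
      (if k ≤ u n then 1 else 0) - (if k ≤ -u n then 1 else 0) := by
  have := abs_le.1 (hu.abs_apply_le (k := n) (by simp))
  simp only [wAct_omegaWt hu hn, sum_sub_distrib, sum_ite_eq', Finset.mem_Icc]
  congr 1 <;> congr 1 <;> simp only [eq_iff_iff] <;> omega

theorem nonnegBC_wAct_omegaWt_iff (hu : IsSignedPerm n u) (hn : 1 ≤ n) :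
    NonnegBC n (wAct u (omegaWt n n)) ↔ 0 < u n := by
  have hu0 := hu.apply_ne_zero (k := n) (by omega)
  have := abs_le.1 (hu.abs_apply_le (k := n) (by simp))
  simp only [NonnegBC, sum_Icc_wAct_omegaWt hu hn, Finset.mem_Icc]
  refine ⟨fun h => ?_, fun h k hk => ?_⟩
  · by_contra! hle
    have := h (-u n) ⟨by omega, by omega⟩
    rw [if_neg (by omega), if_pos le_rfl] at this
    norm_num at this
  · rw [if_neg (by omega : ¬k ≤ -u n)]
    split_ifs <;> norm_num

theorem nonposBC_wAct_omegaWt_iff (hu : IsSignedPerm n u) (hn : 1 ≤ n) :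
    NonposBC n (wAct u (omegaWt n n)) ↔ u n < 0 := by
  have hu0 := hu.apply_ne_zero (k := n) (by omega)
  have := abs_le.1 (hu.abs_apply_le (k := n) (by simp))
  simp only [NonposBC, sum_Icc_wAct_omegaWt hu hn, Finset.mem_Icc]
  refine ⟨fun h => ?_, fun h k hk => ?_⟩
  · by_contra! hle
    have := h (u n) ⟨by omega, by omega⟩
    rw [if_pos le_rfl, if_neg (by omega)] at this
    norm_num at this
  · rw [if_neg (by omega : ¬k ≤ u n)]
    split_ifs <;> norm_num

theorem nonnegBC_minRep_iff {j : ℕ} (hj : j < 2 * n) :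
    NonnegBC n (wAct (minRep n j) (omegaWt n n)) ↔ j < n := by
  rw [nonnegBC_wAct_omegaWt_iff (isSignedPerm_minRep hj) (by omega), minRep_apply_self hj,
    repValue]
  split_ifs <;> omega

theorem nonposBC_minRep_iff {j : ℕ} (hj : j < 2 * n) :
    NonposBC n (wAct (minRep n j) (omegaWt n n)) ↔ n ≤ j := by
  rw [nonposBC_wAct_omegaWt_iff (isSignedPerm_minRep hj) (by omega), minRep_apply_self hj,
    repValue]
  split_ifs <;> omega

end weight

end

theorem extreme_elements_r_eq_n_BC_general (n : ℕ) (v w : Equiv.Perm ℤ)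
    (hv : IsSignedPerm n v) (hw0 : IsSignedPerm n w)
    (hv1 : ∀ k : ℤ, 1 ≤ k → k ≤ (n : ℤ) - 1 → v k = k + 1) (hvn : v (n : ℤ) = 1)
    (hw1 : ∀ k : ℤ, 1 ≤ k → k ≤ (n : ℤ) - 1 → w k = k + 1) (hwn : w (n : ℤ) = -1) :
    IsMinRepB n n v ∧ NonnegBC n (wAct v (omegaWt n n)) ∧
    (∀ u, IsMinRepB n n u → NonnegBC n (wAct u (omegaWt n n)) →
      bruhat (BGens n) v u → u = v) ∧
    (∀ u, IsMinRepB n n u → NonnegBC n (wAct u (omegaWt n n)) →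
      (∀ u', IsMinRepB n n u' → NonnegBC n (wAct u' (omegaWt n n)) →
        bruhat (BGens n) u u' → u' = u) → u = v) ∧
    w = bgen 1 * v ∧
    IsMinRepB n n w ∧ NonposBC n (wAct w (omegaWt n n)) ∧
    (∀ u, IsMinRepB n n u → NonposBC n (wAct u (omegaWt n n)) →
      bruhat (BGens n) u w → u = w) ∧
    (∀ u, IsMinRepB n n u → NonposBC n (wAct u (omegaWt n n)) →
      (∀ u', IsMinRepB n n u' → NonposBC n (wAct u' (omegaWt n n)) →
        bruhat (BGens n) u' u → u' = u) → u = w) ∧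
    ∀ t : ℤ, wAct w (omegaWt n n) t = -wAct v (omegaWt n n) t := by
  have hn : 1 ≤ n := Nat.one_le_iff_ne_zero.2 fun h => by
    subst h; simp [hv.apply_zero] at hvn
  have hv' : v = minRep n (n - 1) := hv.eq_minRep_of_apply_eq_add_one hv1 (by omega)
    (by rw [hvn, repValue, if_pos (by omega)]; omega)
  have hw' : w = minRep n n := hw0.eq_minRep_of_apply_eq_add_one hw1 (by omega)
    (by rw [hwn, repValue, if_neg (by omega)]; omega)
  subst hv' hw'
  refine ⟨isMinRepB_minRep (by omega), (nonnegBC_minRep_iff (by omega)).2 (by omega),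
    fun u hu hnn hvu => ?_, fun u hu hnn hmax => ?_, minRep_self hn, isMinRepB_minRep (by omega),
    (nonposBC_minRep_iff (by omega)).2 le_rfl, fun u hu hnp huw => ?_, fun u hu hnp hmin => ?_,
    fun t => ?_⟩
  · obtain ⟨j, hj, rfl⟩ := hu.exists_eq_minRep hn
    rw [nonnegBC_minRep_iff hj] at hnn
    refine (hvu.eq_or_wordLen_lt.resolve_right ?_).symm
    rw [wordLen_minRep hj, wordLen_minRep (by omega)]
    omega
  · obtain ⟨j, hj, rfl⟩ := hu.exists_eq_minRep hn
    rw [nonnegBC_minRep_iff hj] at hnn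
    exact (hmax _ (isMinRepB_minRep (by omega)) ((nonnegBC_minRep_iff (by omega)).2 (by omega))
      (bruhat_minRep_of_le (by omega) (by omega))).symm
  · obtain ⟨j, hj, rfl⟩ := hu.exists_eq_minRep hn
    rw [nonposBC_minRep_iff hj] at hnp
    refine huw.eq_or_wordLen_lt.resolve_right ?_
    rw [wordLen_minRep hj, wordLen_minRep (by omega)]
    omega
  · obtain ⟨j, hj, rfl⟩ := hu.exists_eq_minRep hn
    rw [nonposBC_minRep_iff hj] at hnp
    exact (hmin _ (isMinRepB_minRep (by omega)) ((nonposBC_minRep_iff (by omega)).2 le_rfl)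
      (bruhat_minRep_of_le hnp hj)).symm
  · rw [wAct_omegaWt (isSignedPerm_minRep (by omega)) hn, hwn,
      wAct_omegaWt (isSignedPerm_minRep (by omega)) hn, hvn]
    split_ifs <;> first | omega | norm_num

/-- in type `B_n`/`C_n` for `r = n`, `v = (2,3,…,n,1)` is the unique maximal
element of `W^{I_n}` with `v(ω_n) ≥ 0`, and `w = (2,3,…,n,-1) = s_1 v` is the unique
minimal element of `W^{I_n}` with `w(ω_n) ≤ 0`; moreover `w(ω_n) = -v(ω_n)`. -/
theorem extreme_elements_r_eq_n_BC (n : ℕ) (hn : 1 ≤ n) (v w : Equiv.Perm ℤ)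
    (hv : IsSignedPerm n v) (hw0 : IsSignedPerm n w)
    (hv1 : ∀ k : ℤ, 1 ≤ k → k ≤ (n : ℤ) - 1 → v k = k + 1) (hvn : v (n : ℤ) = 1)
    (hw1 : ∀ k : ℤ, 1 ≤ k → k ≤ (n : ℤ) - 1 → w k = k + 1) (hwn : w (n : ℤ) = -1) :
    IsMinRepB n n v ∧ NonnegBC n (wAct v (omegaWt n n)) ∧
    (∀ u, IsMinRepB n n u → NonnegBC n (wAct u (omegaWt n n)) →
      bruhat (BGens n) v u → u = v) ∧
    (∀ u, IsMinRepB n n u → NonnegBC n (wAct u (omegaWt n n)) →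
      (∀ u', IsMinRepB n n u' → NonnegBC n (wAct u' (omegaWt n n)) →
        bruhat (BGens n) u u' → u' = u) → u = v) ∧
    w = bgen 1 * v ∧
    IsMinRepB n n w ∧ NonposBC n (wAct w (omegaWt n n)) ∧
    (∀ u, IsMinRepB n n u → NonposBC n (wAct u (omegaWt n n)) →
      bruhat (BGens n) u w → u = w) ∧
    (∀ u, IsMinRepB n n u → NonposBC n (wAct u (omegaWt n n)) →
      (∀ u', IsMinRepB n n u' → NonposBC n (wAct u' (omegaWt n n)) →
        bruhat (BGens n) u' u → u' = u) → u = w) ∧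
    ∀ t : ℤ, wAct w (omegaWt n n) t = -wAct v (omegaWt n n) t :=
  extreme_elements_r_eq_n_BC_general n v w hv hw0 hv1 hvn hw1 hwn
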